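/- Let G and H be lcsc groups, each with a right-invariant, proper metric compatible with its topology, let μ_G be a right-invariant Haar measure on G, let Γ ⊆ G × H be a uniform lattice such that π_H(Γ) is dense in H, and let A ⊆ H be a nonempty bounded open set. If G has exact polynomial growth of degree κ with respect to its metric, then |(B_r^G(e) × A) ∩ Γ| ≍ r^κ, i.e. there exist constants 0 < a ≤ b and r₀ > 0 such that a·r^κ ≤ |(B_r^G(e) × A) ∩ Γ| ≤ b·r^κ for all r ≥ r₀. -/

import Mathlib

/-!
Discreteness makes `Γ` uniformly `ε`-separated for the right-invariant max-metric on `G × H`.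
Over each of finitely many balls of radius `ε / 2` covering `A`, the lattice points of
`B_r(e) × A` have `ε`-separated `G`-coordinates, so disjoint right translates of `B_{ε/2}(e)`
allow at most `μ(B_{r + ε/2}(e)) / μ(B_{ε/2}(e))` of them. Conversely, cocompactness and the
density of `π_H(Γ)` give an `R` such that every `g ∈ G` is within `R` of the `G`-coordinate of a
lattice point over `A`, so the `R`-balls around the counted points cover `B_{r - R}(e)`.
Exact polynomial growth makes `μ(B_{r + s}(e))` comparable to `r ^ κ` for every fixed shift `s`.
-/

open Filter Function Metric MeasureTheory Set Asymptotics Topology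
open scoped ENNReal Pointwise

namespace Asymptotics

theorem isTheta_comp_add_const_rpow {f : ℝ → ℝ} {c κ : ℝ} (hc : c ≠ 0)
    (hf : Tendsto (fun r => f r / (c * r ^ κ)) atTop (𝓝 1)) (s : ℝ) :
    (fun r => f (r + s)) =Θ[atTop] fun r => r ^ κ := by
  have hf : f =Θ[atTop] fun r => r ^ κ :=
    (isTheta_const_mul_right hc).1 (isTheta_of_div_tendsto_nhds_ne_zero hf one_ne_zero).symm
  have hshift : (fun r : ℝ => r + s) =Θ[atTop] id :=
    (IsEquivalent.refl.add_const_of_norm_tendsto_atTop tendsto_norm_atTop_atTop).isTheta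
  have hshift_nonneg : ∀ᶠ r : ℝ in atTop, 0 ≤ r + s :=
    (eventually_ge_atTop (-s)).mono fun r hr => by linarith
  have hshift_tendsto := tendsto_atTop_add_const_right atTop s tendsto_id
  exact IsTheta.trans ⟨hf.1.comp_tendsto hshift_tendsto, hf.2.comp_tendsto hshift_tendsto⟩
    (hshift.rpow hshift_nonneg (eventually_ge_atTop 0))

theorem IsTheta.exists_bounds_atTop {u v : ℝ → ℝ} (h : u =Θ[atTop] v)
    (hu : ∀ᶠ r in atTop, 0 ≤ u r) (hv : ∀ᶠ r in atTop, 0 ≤ v r) :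
    ∃ a b r₀ : ℝ, 0 < a ∧ a ≤ b ∧ 0 < r₀ ∧ ∀ r, r₀ ≤ r → a * v r ≤ u r ∧ u r ≤ b * v r := by
  obtain ⟨b, -, hub⟩ := h.1.exists_pos
  obtain ⟨a', ha', hva⟩ := h.2.exists_pos
  obtain ⟨r₀, hr₀⟩ := eventually_atTop.1 <| hub.bound.and <| hva.bound.and <| hu.and hv
  refine ⟨a'⁻¹, max a'⁻¹ b, max r₀ 1, inv_pos.2 ha', le_max_left _ _, by positivity,
    fun r hr => ?_⟩
  obtain ⟨hub, hva, hu, hv⟩ := hr₀ r (le_of_max_le_left hr)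
  rw [Real.norm_of_nonneg hu, Real.norm_of_nonneg hv] at hub hva
  exact ⟨(inv_mul_le_iff₀ ha').2 hva, hub.trans (by gcongr; exact le_max_right _ _)⟩

end Asymptotics

theorem Set.Finite.cast_encard_eq_natCard {α : Type*} {s : Set α} (hs : s.Finite) :
    (s.encard : ℝ≥0∞) = Nat.card s := by
  rw [Nat.card_coe_set_eq, ← hs.cast_ncard_eq]; rfl

section RightInvariantMetric

variable {G : Type*} [Group G] [MetricSpace G] [IsIsometricSMul Gᵐᵒᵖ G]

theorem Subgroup.exists_pairwise_le_dist_of_discreteTopology (Γ : Subgroup G)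
    [DiscreteTopology Γ] : ∃ ε > 0, (Γ : Set G).Pairwise (ε ≤ dist · ·) := by
  obtain ⟨ε, hε, hball⟩ := Metric.isOpen_iff.1 (isOpen_discrete {(1 : Γ)}) 1 rfl
  refine ⟨ε, hε, fun p hp q hq hpq => not_lt.1 fun hlt => hpq ?_⟩
  have hmem : (⟨p * q⁻¹, Γ.mul_mem hp (Γ.inv_mem hq)⟩ : Γ) ∈ ball 1 ε := by
    rwa [mem_ball, Subtype.dist_eq, Subgroup.coe_one, ← mul_inv_cancel q, dist_mul_right]
  simpa [mul_inv_eq_one] using hball hmem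

variable [MeasurableSpace G] [BorelSpace G] [ContinuousMul G]
  (μ : Measure G) [μ.IsMulRightInvariant]

theorem measure_ball_eq_measure_ball_one (x : G) (r : ℝ) : μ (ball x r) = μ (ball 1 r) := by
  rw [← measure_preimage_mul_right μ x⁻¹ (ball 1 r), preimage_mul_right_ball, one_div, inv_inv]

theorem encard_mul_measure_ball_le_of_pairwise_le_dist {S : Set G} {ε r : ℝ}
    (hS : S ⊆ ball 1 r) (hsep : S.Pairwise (ε ≤ dist · ·)) :
    S.encard * μ (ball 1 (ε / 2)) ≤ μ (ball 1 (r + ε / 2)) := by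
  have hdisj : Pairwise (Disjoint on fun x : S => ball (x : G) (ε / 2)) :=
    fun x y hxy => ball_disjoint_ball (by linarith [hsep x.2 y.2 (Subtype.coe_ne_coe.2 hxy)])
  calc S.encard * μ (ball 1 (ε / 2)) = ∑' x : S, μ (ball (x : G) (ε / 2)) := by
        simp only [measure_ball_eq_measure_ball_one, ENNReal.tsum_set_const]
    _ ≤ μ (⋃ x : S, ball (x : G) (ε / 2)) :=
        tsum_meas_le_meas_iUnion_of_disjoint μ (fun _ => measurableSet_ball) hdisj
    _ ≤ μ (ball 1 (r + ε / 2)) := by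
        refine measure_mono (iUnion_subset fun x => ball_subset_ball' ?_)
        linarith [mem_ball.1 (hS x.2)]

theorem measure_ball_le_encard_mul_of_subset_biUnion {S : Set G} (hS : S.Countable) {ρ R : ℝ}
    (hcov : ball 1 ρ ⊆ ⋃ x ∈ S, ball x R) :
    μ (ball 1 ρ) ≤ S.encard * μ (ball 1 R) :=
  calc μ (ball 1 ρ) ≤ ∑' x : S, μ (ball (x : G) R) :=
        (measure_mono hcov).trans (measure_biUnion_le μ hS _)
    _ = S.encard * μ (ball 1 R) := by
        simp only [measure_ball_eq_measure_ball_one, ENNReal.tsum_set_const]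

end RightInvariantMetric

section LatticePointCount

variable {G H : Type*} [Group G] [MetricSpace G] [IsIsometricSMul Gᵐᵒᵖ G] [ProperSpace G]
  [MeasurableSpace G] [BorelSpace G] [ContinuousMul G]
  (μ : Measure G) [μ.IsMulRightInvariant] [IsFiniteMeasureOnCompacts μ]
  {S : Set (G × H)} {A : Set H}

theorem measure_ball_sub_le_natCard_mul {R r : ℝ}
    (hdense : ∀ g : G, ∃ p ∈ S, p.2 ∈ A ∧ dist g p.1 < R) (hfin : (ball 1 r ×ˢ A ∩ S).Finite) :
    (μ (ball 1 (r - R))).toReal ≤ Nat.card ↥(ball 1 r ×ˢ A ∩ S) * (μ (ball 1 R)).toReal := by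
  have hcov : ball 1 (r - R) ⊆ ⋃ x ∈ Prod.fst '' (ball 1 r ×ˢ A ∩ S), ball x R := by
    intro g hg
    obtain ⟨p, hpS, hpA, hgp⟩ := hdense g
    have hp : p.1 ∈ ball 1 r := by
      rw [mem_ball] at hg ⊢
      linarith [dist_triangle_left p.1 1 g]
    exact mem_iUnion₂.2 ⟨p.1, ⟨p, ⟨⟨hp, hpA⟩, hpS⟩, rfl⟩, hgp⟩
  have h : μ (ball 1 (r - R)) ≤ (ball 1 r ×ˢ A ∩ S).encard * μ (ball 1 R) :=
    (measure_ball_le_encard_mul_of_subset_biUnion μ (hfin.image _).countable hcov).trans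
      (by gcongr; exact encard_image_le Prod.fst _)
  rw [hfin.cast_encard_eq_natCard] at h
  simpa using ENNReal.toReal_mono (by finiteness) h

variable [PseudoMetricSpace H] {t : Finset H} {ε r : ℝ}

omit [ProperSpace G] [IsFiniteMeasureOnCompacts μ] in
theorem encard_mul_measure_ball_le_of_subset_prod (hε : 0 < ε)
    (hsep : S.Pairwise (ε ≤ dist · ·)) (hS : S ⊆ ball 1 r ×ˢ A)
    (hA : A ⊆ ⋃ j ∈ t, ball j (ε / 2)) :
    S.encard * μ (ball 1 (ε / 2)) ≤ t.card * μ (ball 1 (r + ε / 2)) := by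
  set fiber : H → Set (G × H) := fun j => {p ∈ S | p.2 ∈ ball j (ε / 2)}
  have hfiber_sep (j : H) : (fiber j).Pairwise (ε ≤ dist ·.1 ·.1) := by
    intro p hp q hq hpq
    have h2 : dist p.2 q.2 < ε := by
      linarith [dist_triangle_right p.2 q.2 j, mem_ball.1 hp.2, mem_ball.1 hq.2]
    simpa [Prod.dist_eq, not_le.2 h2] using hsep hp.1 hq.1 hpq
  have hfiber (j : H) : (fiber j).encard * μ (ball 1 (ε / 2)) ≤ μ (ball 1 (r + ε / 2)) := by
    have hinj : InjOn Prod.fst (fiber j) := fun p hp q hq hpq => by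
      by_contra hne
      have : ε ≤ dist p.1 q.1 := hfiber_sep j hp hq hne
      rw [hpq, dist_self] at this
      linarith
    rw [← hinj.encard_image]
    refine encard_mul_measure_ball_le_of_pairwise_le_dist μ ?_ ?_
    · rintro _ ⟨p, hp, rfl⟩; exact (hS hp.1).1
    · rintro _ ⟨p, hp, rfl⟩ _ ⟨q, hq, rfl⟩ hne
      exact hfiber_sep j hp hq fun h => hne (h ▸ rfl)
  have hcover : S ⊆ ⋃ j ∈ t, fiber j := fun p hp => by
    obtain ⟨j, hj, hpj⟩ := mem_iUnion₂.1 (hA (hS hp).2)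
    exact mem_iUnion₂.2 ⟨j, hj, hp, hpj⟩
  calc S.encard * μ (ball 1 (ε / 2))
      ≤ (∑ j ∈ t, (fiber j).encard : ℕ∞) * μ (ball 1 (ε / 2)) := by
        gcongr
        exact (encard_le_encard hcover).trans (t.set_encard_biUnion_le fiber)
    _ = ∑ j ∈ t, (fiber j).encard * μ (ball 1 (ε / 2)) := by
        rw [← ENat.toENNRealRingHom_apply, map_sum, Finset.sum_mul]
    _ ≤ ∑ _j ∈ t, μ (ball 1 (r + ε / 2)) := Finset.sum_le_sum fun j _ => hfiber j
    _ = t.card * μ (ball 1 (r + ε / 2)) := by rw [Finset.sum_const, nsmul_eq_mul]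

theorem natCard_mul_measure_ball_le_of_subset_prod (hε : 0 < ε)
    (hsep : S.Pairwise (ε ≤ dist · ·)) (hS : S ⊆ ball 1 r ×ˢ A)
    (hA : A ⊆ ⋃ j ∈ t, ball j (ε / 2)) (hfin : S.Finite) :
    Nat.card S * (μ (ball 1 (ε / 2))).toReal ≤ t.card * (μ (ball 1 (r + ε / 2))).toReal := by
  have h := encard_mul_measure_ball_le_of_subset_prod μ hε hsep hS hA
  rw [hfin.cast_encard_eq_natCard] at h
  simpa using ENNReal.toReal_mono (by finiteness) h

end LatticePointCount

section RelativeDensity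

variable {G H : Type*} [Group G] [TopologicalSpace G] [IsTopologicalGroup G]
  [Group H] [TopologicalSpace H] [IsTopologicalGroup H]

theorem Subgroup.exists_isCompact_forall_exists_mul_fst_eq {Γ : Subgroup (G × H)}
    {C : Set (G × H)} (hC : IsCompact C) (hCΓ : C * (Γ : Set (G × H)) = univ)
    (hdense : Dense (Prod.snd '' (Γ : Set (G × H)))) {A : Set H} (hA : IsOpen A)
    (hAne : A.Nonempty) :
    ∃ K : Set G, IsCompact K ∧ ∀ g : G, ∃ k ∈ K, ∃ γ ∈ Γ, γ.2 ∈ A ∧ k * γ.1 = g := by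
  obtain ⟨a, ha⟩ := hAne
  -- `c.2 ∈ U γ` says that `γ * (c⁻¹ * (g, a))` has its `H`-coordinate in `A`.
  set U : Γ → Set H := fun γ => (fun h => (γ : G × H).2 * h⁻¹ * a) ⁻¹' A
  have hU_open (γ : Γ) : IsOpen (U γ) := hA.preimage (by fun_prop)
  have hU_cover : Prod.snd '' C ⊆ ⋃ γ, U γ := fun h _ => by
    have hopen : IsOpen ((fun x => x * h⁻¹ * a) ⁻¹' A) := hA.preimage (by fun_prop)
    obtain ⟨_, ⟨γ, hγ, rfl⟩, hγA⟩ := hdense.exists_mem_open hopen ⟨h, by simpa using ha⟩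
    exact mem_iUnion.2 ⟨⟨γ, hγ⟩, hγA⟩
  obtain ⟨F, hF⟩ := (hC.image continuous_snd).elim_finite_subcover U hU_open hU_cover
  refine ⟨Prod.fst '' C * (fun γ : Γ => (γ : G × H).1⁻¹) '' F,
    (hC.image continuous_fst).mul (F.finite_toSet.image _).isCompact, fun g => ?_⟩
  obtain ⟨c, hc, q, hq, hcq⟩ := mem_mul.1 (hCΓ.symm ▸ mem_univ (g, a))
  obtain ⟨γ, hγF, hγ⟩ := mem_iUnion₂.1 (hF (mem_image_of_mem Prod.snd hc))
  have hq' : q = c⁻¹ * (g, a) := by rw [← hcq]; group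
  refine ⟨c.1 * (γ : G × H).1⁻¹, mul_mem_mul (mem_image_of_mem _ hc) ⟨γ, hγF, rfl⟩,
    γ * q, Γ.mul_mem γ.2 hq, ?_, ?_⟩
  · simpa [hq', U, mul_assoc] using hγ
  · simp [hq']

end RelativeDensity

theorem Subgroup.exists_forall_exists_dist_fst_lt {G H : Type*} [Group G] [MetricSpace G]
    [IsTopologicalGroup G] [IsIsometricSMul Gᵐᵒᵖ G] [Group H] [TopologicalSpace H]
    [IsTopologicalGroup H] {Γ : Subgroup (G × H)} {C : Set (G × H)} (hC : IsCompact C)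
    (hCΓ : C * (Γ : Set (G × H)) = univ) (hdense : Dense (Prod.snd '' (Γ : Set (G × H))))
    {A : Set H} (hA : IsOpen A) (hAne : A.Nonempty) :
    ∃ R : ℝ, ∀ g : G, ∃ γ ∈ Γ, γ.2 ∈ A ∧ dist g γ.1 < R := by
  obtain ⟨K, hK, hKΓ⟩ := exists_isCompact_forall_exists_mul_fst_eq hC hCΓ hdense hA hAne
  obtain ⟨R, hR⟩ := hK.isBounded.subset_ball 1
  refine ⟨R, fun g => ?_⟩
  obtain ⟨k, hk, γ, hγ, hγA, rfl⟩ := hKΓ g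
  refine ⟨γ, hγ, hγA, ?_⟩
  simpa [← dist_mul_right k 1 γ.1] using hR hk

theorem growth_lemma_polynomial_growth_general
    {G H : Type*}
    [Group G] [MetricSpace G] [IsTopologicalGroup G] [ProperSpace G]
    [Group H] [MetricSpace H] [IsTopologicalGroup H] [ProperSpace H]
    [MeasurableSpace G] [BorelSpace G]
    (hinvG : ∀ x y g : G, dist (x * g) (y * g) = dist x y)
    (hinvH : ∀ x y g : H, dist (x * g) (y * g) = dist x y)
    (μ : MeasureTheory.Measure G)
    [MeasureTheory.Measure.IsMulRightInvariant μ]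
    [MeasureTheory.IsFiniteMeasureOnCompacts μ]
    [MeasureTheory.Measure.IsOpenPosMeasure μ]
    (Γ : Subgroup (G × H)) [DiscreteTopology Γ]
    (hcocompact : ∃ C : Set (G × H), IsCompact C ∧ C * (Γ : Set (G × H)) = Set.univ)
    (hdense : Dense (Prod.snd '' (Γ : Set (G × H))))
    (A : Set H) (hAne : A.Nonempty) (hAbdd : Bornology.IsBounded A) (hAopen : IsOpen A)
    (κ : ℝ)
    (hgrowth : ∃ c : ℝ, 0 < c ∧
      Filter.Tendsto (fun r : ℝ => (μ (Metric.ball (1 : G) r)).toReal / (c * r ^ κ))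
        Filter.atTop (nhds 1)) :
    ∃ a b r₀ : ℝ, 0 < a ∧ a ≤ b ∧ 0 < r₀ ∧ ∀ r : ℝ, r₀ ≤ r →
      a * r ^ κ ≤ (Nat.card ↥((Metric.ball (1 : G) r ×ˢ A) ∩ (Γ : Set (G × H))) : ℝ) ∧
      (Nat.card ↥((Metric.ball (1 : G) r ×ˢ A) ∩ (Γ : Set (G × H))) : ℝ) ≤ b * r ^ κ := by
  have : IsIsometricSMul Gᵐᵒᵖ G := ⟨fun g => Isometry.of_dist_eq fun x y => hinvG x y g.unop⟩
  have : IsIsometricSMul Hᵐᵒᵖ H := ⟨fun h => Isometry.of_dist_eq fun x y => hinvH x y h.unop⟩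
  obtain ⟨c, hc, hlim⟩ := hgrowth
  obtain ⟨C, hC, hCΓ⟩ := hcocompact
  obtain ⟨ε, hε, hsep⟩ := Γ.exists_pairwise_le_dist_of_discreteTopology
  obtain ⟨R, hR⟩ := Γ.exists_forall_exists_dist_fst_lt hC hCΓ hdense hAopen hAne
  obtain ⟨t, ht⟩ := hAbdd.isCompact_closure.elim_finite_subcover (fun j => ball j (ε / 2))
    (fun _ => isOpen_ball) fun x _ => mem_iUnion.2 ⟨x, mem_ball_self (half_pos hε)⟩
  have hfin (r : ℝ) : (ball 1 r ×ˢ A ∩ (Γ : Set (G × H))).Finite :=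
    finite_isBounded_inter_isClosed (isDiscrete_iff_discreteTopology.2 ‹_›)
      (isBounded_ball.prod hAbdd) Γ.isClosed_of_discrete
  set N : ℝ → ℝ := fun r => Nat.card ↥(ball 1 r ×ˢ A ∩ (Γ : Set (G × H)))
  set V : ℝ → ℝ := fun r => (μ (ball 1 r)).toReal
  have hm : 0 < V (ε / 2) :=
    ENNReal.toReal_pos (measure_ball_pos μ 1 (half_pos hε)).ne' measure_ball_lt_top.ne
  have hupper : N =O[atTop] fun r => V (r + ε / 2) := .of_bound (t.card / V (ε / 2)) <|
    .of_forall fun r => by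
      rw [Real.norm_natCast, Real.norm_of_nonneg ENNReal.toReal_nonneg, div_mul_eq_mul_div,
        le_div_iff₀ hm]
      exact natCard_mul_measure_ball_le_of_subset_prod μ hε (hsep.mono inter_subset_right)
        inter_subset_left (subset_closure.trans ht) (hfin r)
  have hlower : (fun r => V (r + -R)) =O[atTop] N := .of_bound (V R) <| .of_forall fun r => by
    rw [Real.norm_natCast, Real.norm_of_nonneg ENNReal.toReal_nonneg, ← sub_eq_add_neg, mul_comm]
    exact measure_ball_sub_le_natCard_mul μ hR (hfin r)
  exact IsTheta.exists_bounds_atTop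
    ⟨hupper.trans (isTheta_comp_add_const_rpow hc.ne' hlim _).1,
      (isTheta_comp_add_const_rpow hc.ne' hlim _).2.trans hlower⟩
    (.of_forall fun r => by positivity)
    ((eventually_ge_atTop 0).mono fun r hr => Real.rpow_nonneg hr κ)

/-- In the setting of the growth lemma, if `G` has exact polynomial growth of
degree `κ` with respect to its metric (i.e. `μ(B_r(e)) / (c·r^κ) → 1` as `r → ∞` for some
`c > 0`), then `|(B_r^G(e) × A) ∩ Γ| ≍ r^κ`: there are `0 < a ≤ b` and `r₀ > 0` with
`a·r^κ ≤ |(B_r^G(e) × A) ∩ Γ| ≤ b·r^κ` for all `r ≥ r₀`. -/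
theorem growth_lemma_polynomial_growth
    {G H : Type*}
    [Group G] [MetricSpace G] [IsTopologicalGroup G] [ProperSpace G] [SecondCountableTopology G]
    [Group H] [MetricSpace H] [IsTopologicalGroup H] [ProperSpace H] [SecondCountableTopology H]
    [MeasurableSpace G] [BorelSpace G]
    (hinvG : ∀ x y g : G, dist (x * g) (y * g) = dist x y)
    (hinvH : ∀ x y g : H, dist (x * g) (y * g) = dist x y)
    (μ : MeasureTheory.Measure G)
    [MeasureTheory.Measure.IsMulRightInvariant μ]
    [MeasureTheory.IsFiniteMeasureOnCompacts μ]
    [MeasureTheory.Measure.IsOpenPosMeasure μ]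
    (Γ : Subgroup (G × H)) [DiscreteTopology Γ]
    (hcocompact : ∃ C : Set (G × H), IsCompact C ∧ C * (Γ : Set (G × H)) = Set.univ)
    (hdense : Dense (Prod.snd '' (Γ : Set (G × H))))
    (A : Set H) (hAne : A.Nonempty) (hAbdd : Bornology.IsBounded A) (hAopen : IsOpen A)
    (κ : ℝ)
    (hgrowth : ∃ c : ℝ, 0 < c ∧
      Filter.Tendsto (fun r : ℝ => (μ (Metric.ball (1 : G) r)).toReal / (c * r ^ κ))
        Filter.atTop (nhds 1)) :
    ∃ a b r₀ : ℝ, 0 < a ∧ a ≤ b ∧ 0 < r₀ ∧ ∀ r : ℝ, r₀ ≤ r →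
      a * r ^ κ ≤ (Nat.card ↥((Metric.ball (1 : G) r ×ˢ A) ∩ (Γ : Set (G × H))) : ℝ) ∧
      (Nat.card ↥((Metric.ball (1 : G) r ×ˢ A) ∩ (Γ : Set (G × H))) : ℝ) ≤ b * r ^ κ :=
  growth_lemma_polynomial_growth_general hinvG hinvH μ Γ hcocompact hdense A hAne hAbdd hAopen κ
    hgrowth
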